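/- Let X be a Polish metric space and f : X → X a uniform homeomorphism (f and f^{-1} uniformly continuous). For a Borel probability measure μ, x ∈ X, ε > 0, s ∈ ℕ, define θ̲_μ^ε(x,s) = inf_{n ≥ s} G_{x,ε,n}(μ), where G_{x,ε,n}(μ) is the integral against μ of the piecewise-linear bump function of D_n(x,·) = max{d(f^k x, f^k y) : −n ≤ k ≤ n} at levels ε, 2ε. Then for every α > 0, ε > 0, s ∈ ℕ, the set {μ ∈ P(X) : θ̲_μ^ε(x,s) ≤ α for μ-a.e. x} is a G_δ subset of P(X) with the weak topology. -/

import Mathlib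

open MeasureTheory
open scoped ENNReal

/-- The two-sided Bowen metric `D_n(x,y) = max{d(f^k x, f^k y) : −n ≤ k ≤ n}`. -/
noncomputable def twoSidedBowenDist {X : Type*} [MetricSpace X] (f : Equiv.Perm X) (n : ℕ)
    (x y : X) : ℝ :=
  (((Finset.Icc (-(n : ℤ)) (n : ℤ)).sup fun i => nndist ((f ^ i) x) ((f ^ i) y) : NNReal) : ℝ)

/-- The piecewise-linear bump function of `D_n(x,·)` at levels `ε, 2ε`. -/
noncomputable def twoSidedBump {X : Type*} [MetricSpace X] (f : Equiv.Perm X) (n : ℕ) (ε : ℝ)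
    (x y : X) : ℝ :=
  max 0 (min 1 (2 - twoSidedBowenDist f n x y / ε))

/-- `θ̲_μ^ε(x,s) = inf_{n ≥ s} G_{x,ε,n}(μ)`, with `G_{x,ε,n}(μ) = ∫ twoSidedBump dμ`. -/
noncomputable def thetaLower {X : Type*} [MetricSpace X] [MeasurableSpace X]
    (f : Equiv.Perm X) (μ : Measure X) (ε : ℝ) (x : X) (s : ℕ) : ℝ :=
  ⨅ n : {m : ℕ // s ≤ m}, ∫ y, twoSidedBump f (n : ℕ) ε x y ∂μ

/-!
Put `Φ(μ) = ∫ min(1, (θ̲_μ^ε(·,s) - α)⁺) dμ`; the set in question is `{Φ ≤ 0}`. Replacing `θ̲` by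
the running minimum `ψ_N = min_{s ≤ n ≤ s+N} G_{·,ε,n}(μ)` gives functionals `Φ_N ≥ Φ` with
`Φ_N → Φ`. Each `Φ_N` is continuous: uniform continuity of `f^{±1}` makes the functions
`G_{·,ε,n}(μ)`, `n ≤ s + N`, equi-uniformly continuous uniformly in `μ`, and by the layer cake
formula integrals of `[0,1]`-valued functions with a common modulus of continuity change by at most
that modulus plus `r` between measures at Lévy–Prokhorov distance `< r`. So `Φ` is upper
semicontinuous, and its sublevel sets are `G_δ`.
-/

open Filter Metric Set Topology TopologicalSpace

theorem integrable_of_nonneg_of_le_one {Ω : Type*} [MeasurableSpace Ω] {μ : Measure Ω}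
    [IsFiniteMeasure μ] {h : Ω → ℝ} (hh : AEStronglyMeasurable h μ) (h0 : 0 ≤ h) (h1 : h ≤ 1) :
    Integrable h μ :=
  .of_bound hh 1 (ae_of_all _ fun x => by simpa [abs_of_nonneg (h0 x)] using h1 x)

theorem Finset.inf'_le_inf'_add {ι : Type*} {s : Finset ι} (H : s.Nonempty) {a b : ι → ℝ}
    {c : ℝ} (h : ∀ i ∈ s, a i ≤ b i + c) : s.inf' H a ≤ s.inf' H b + c := by
  obtain ⟨i, hi, hb⟩ := s.exists_mem_eq_inf' H b
  rw [hb]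
  exact (s.inf'_le a hi).trans (h i hi)

section UnitClamp

def unitClamp (t : ℝ) : ℝ := max 0 (min 1 t)

theorem unitClamp_nonneg (t : ℝ) : 0 ≤ unitClamp t := le_max_left _ _

theorem unitClamp_le_one (t : ℝ) : unitClamp t ≤ 1 := max_le zero_le_one (min_le_left _ _)

theorem unitClamp_mono : Monotone unitClamp := fun _ _ h => max_le_max le_rfl (min_le_min le_rfl h)

theorem continuous_unitClamp : Continuous unitClamp :=
  continuous_const.max (continuous_const.min continuous_id)

theorem unitClamp_eq_zero_iff {t : ℝ} : unitClamp t = 0 ↔ t ≤ 0 := by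
  unfold unitClamp
  grind

theorem unitClamp_le_add {a b c : ℝ} (h : a ≤ b + c) (hc : 0 ≤ c) :
    unitClamp a ≤ unitClamp b + c := by
  unfold unitClamp
  grind

theorem integrable_unitClamp_comp {Ω : Type*} [MeasurableSpace Ω] {μ : Measure Ω}
    [IsFiniteMeasure μ] {g : Ω → ℝ} (hg : AEStronglyMeasurable g μ) :
    Integrable (fun x => unitClamp (g x)) μ :=
  integrable_of_nonneg_of_le_one (continuous_unitClamp.comp_aestronglyMeasurable hg)
    (fun _ => unitClamp_nonneg _) (fun _ => unitClamp_le_one _)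

theorem ae_le_iff_integral_unitClamp_sub_nonpos {Ω : Type*} [MeasurableSpace Ω] {μ : Measure Ω}
    [IsFiniteMeasure μ] {g : Ω → ℝ} (hg : AEStronglyMeasurable g μ) (a : ℝ) :
    (∀ᵐ x ∂μ, g x ≤ a) ↔ ∫ x, unitClamp (g x - a) ∂μ ≤ 0 := by
  have h0 : 0 ≤ ∫ x, unitClamp (g x - a) ∂μ := integral_nonneg fun _ => unitClamp_nonneg _
  rw [h0.ge_iff_eq, eq_comm,
    integral_eq_zero_iff_of_nonneg (fun _ => unitClamp_nonneg _)
      (integrable_unitClamp_comp (g := fun x => g x - a) (hg.sub aestronglyMeasurable_const))]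
  simp only [EventuallyEq, Pi.zero_apply, unitClamp_eq_zero_iff, sub_nonpos]

end UnitClamp

section Semicontinuity

variable {T : Type*} [TopologicalSpace T]

theorem upperSemicontinuous_of_tendsto_of_le {Φs : ℕ → T → ℝ} {Φ : T → ℝ}
    (hcont : ∀ N, Continuous (Φs N)) (hlim : ∀ t, Tendsto (fun N => Φs N t) atTop (𝓝 (Φ t)))
    (hle : ∀ N t, Φ t ≤ Φs N t) : UpperSemicontinuous Φ := by
  intro t y hy
  obtain ⟨N, hN⟩ := ((hlim t).eventually (gt_mem_nhds hy)).exists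
  filter_upwards [(hcont N).continuousAt.eventually (gt_mem_nhds hN)] with t' ht'
  exact (hle N t').trans_lt ht'

theorem UpperSemicontinuous.isGδ_setOf_le {Φ : T → ℝ} (hΦ : UpperSemicontinuous Φ) (a : ℝ) :
    IsGδ {t | Φ t ≤ a} := by
  have : {t | Φ t ≤ a} = ⋂ m : ℕ, Φ ⁻¹' Iio (a + 1 / (m + 1)) := by
    ext t
    simp only [mem_ofPred_eq, mem_iInter, mem_preimage, mem_Iio]
    refine ⟨fun h m => h.trans_lt (lt_add_of_pos_right a Nat.one_div_pos_of_nat),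
      fun h => le_of_forall_pos_lt_add fun δ hδ => ?_⟩
    obtain ⟨m, hm⟩ := exists_nat_one_div_lt hδ
    exact (h m).trans (by linarith)
  rw [this]
  exact IsGδ.iInter_of_isOpen fun m => hΦ.isOpen_preimage _

end Semicontinuity

section LevyProkhorov

variable {X : Type*} [MetricSpace X] [MeasurableSpace X]

theorem measureReal_le_measureReal_thickening_add_of_levyProkhorovEDist_lt {μ ν : Measure X}
    [IsFiniteMeasure ν] {r : ℝ} (hr : 0 ≤ r) (hμν : levyProkhorovEDist μ ν < ENNReal.ofReal r)
    {B : Set X} (hB : MeasurableSet B) : μ.real B ≤ ν.real (thickening r B) + r := by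
  have h := left_measure_le_of_levyProkhorovEDist_lt hμν hB
  rw [ENNReal.toReal_ofReal hr] at h
  calc μ.real B ≤ (ν (thickening r B) + ENNReal.ofReal r).toReal :=
        ENNReal.toReal_mono (by finiteness) h
    _ = ν.real (thickening r B) + r := by
        rw [ENNReal.toReal_add (by finiteness) ENNReal.ofReal_ne_top, ENNReal.toReal_ofReal hr,
          measureReal_def]

theorem integral_le_integral_add_of_levyProkhorovEDist_lt {μ ν : Measure X}
    [IsProbabilityMeasure μ] [IsProbabilityMeasure ν] {g : X → ℝ} (hg : Measurable g)
    (hg0 : 0 ≤ g) (hg1 : g ≤ 1) {r c : ℝ} (hr : 0 < r) (hc : 0 ≤ c)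
    (hmod : ∀ a b, dist a b < r → g a ≤ g b + c)
    (hμν : levyProkhorovEDist μ ν < ENNReal.ofReal r) :
    ∫ x, g x ∂μ ≤ ∫ x, g x ∂ν + c + r := by
  have layer_cake {κ : Measure X} [IsProbabilityMeasure κ] {h : X → ℝ} (hh : Measurable h)
      (h0 : 0 ≤ h) (h1 : h ≤ 1) : ∫ x, h x ∂κ = ∫ t in Ioc 0 1, κ.real {x | t ≤ h x} :=
    (integrable_of_nonneg_of_le_one hh.aestronglyMeasurable h0 h1).integral_eq_integral_Ioc_meas_le
      (ae_of_all _ h0) (ae_of_all _ h1)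
  have integrableOn_level (κ : Measure X) [IsFiniteMeasure κ] (h : X → ℝ) :
      IntegrableOn (fun t => κ.real {x | t ≤ h x}) (Ioc 0 1) :=
    (show Antitone fun t : ℝ => κ.real {x | t ≤ h x} from fun _ _ hst =>
      measureReal_mono fun _ hx => hst.trans hx).intervalIntegrable.1
  -- the layer cake of `min (g + c) 1` on `ν` absorbs the `c`-enlargement of the level sets
  set g' : X → ℝ := fun x => min (g x + c) 1
  have hg' : Measurable g' := (hg.add_const c).min measurable_const
  have hgi : Integrable g ν := integrable_of_nonneg_of_le_one hg.aestronglyMeasurable hg0 hg1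
  have key : ∀ t ∈ Ioc (0 : ℝ) 1, μ.real {x | t ≤ g x} ≤ ν.real {x | t ≤ g' x} + r := by
    intro t ht
    have hsub : thickening r {x | t ≤ g x} ⊆ {x | t ≤ g' x} := by
      intro a ha
      obtain ⟨b, hb, hab⟩ := mem_thickening_iff.1 ha
      exact le_min (hb.trans (hmod b a (by rwa [dist_comm]))) ht.2
    exact (measureReal_le_measureReal_thickening_add_of_levyProkhorovEDist_lt hr.le hμν
      (hg (measurableSet_Ici (a := t)))).trans (add_le_add_left (measureReal_mono hsub) r)
  calc ∫ x, g x ∂μ = ∫ t in Ioc 0 1, μ.real {x | t ≤ g x} := layer_cake hg hg0 hg1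
    _ ≤ ∫ t in Ioc 0 1, (ν.real {x | t ≤ g' x} + r) :=
        setIntegral_mono_on (integrableOn_level μ g)
          ((integrableOn_level ν g').add (integrableOn_const (by simp))) measurableSet_Ioc key
    _ = ∫ x, g' x ∂ν + r := by
        rw [integral_add (integrableOn_level ν g') (integrableOn_const (by simp)),
          layer_cake hg' (fun x => le_min (add_nonneg (hg0 x) hc) zero_le_one)
            (fun x => min_le_right _ _)]
        simp
    _ ≤ ∫ x, (g x + c) ∂ν + r := by
        gcongr ?_ + _
        exact integral_mono (integrable_of_nonneg_of_le_one hg'.aestronglyMeasurable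
          (fun x => le_min (add_nonneg (hg0 x) hc) zero_le_one) fun x => min_le_right _ _)
          (hgi.add (integrable_const c)) fun x => min_le_left _ _
    _ = ∫ x, g x ∂ν + c + r := by rw [integral_add hgi (integrable_const c)]; simp

theorem MeasureTheory.ProbabilityMeasure.continuous_of_forall_levyProkhorovEDist_lt
    [SeparableSpace X] [OpensMeasurableSpace X] {Φ : ProbabilityMeasure X → ℝ}
    (h : ∀ δ > 0, ∃ r > 0, ∀ κ ν : ProbabilityMeasure X,
      levyProkhorovEDist (κ : Measure X) ν < ENNReal.ofReal r → Φ κ ≤ Φ ν + δ) :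
    Continuous Φ := by
  have : UniformContinuous (Φ ∘ LevyProkhorov.toMeasure) := by
    refine Metric.uniformContinuous_iff.2 fun δ hδ => ?_
    obtain ⟨r, hr, hΦ⟩ := h (δ / 2) (half_pos hδ)
    refine ⟨r, hr, fun {κ ν} hκν => ?_⟩
    have hκν' : levyProkhorovEDist (κ.toMeasure : Measure X) ν.toMeasure < ENNReal.ofReal r :=
      edist_lt_ofReal.2 hκν
    have h₁ := hΦ _ _ hκν'
    have h₂ := hΦ _ _ (levyProkhorovEDist_comm (ν.toMeasure : Measure X) κ.toMeasure ▸ hκν')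
    rw [Real.dist_eq, abs_sub_lt_iff]
    constructor <;> simp only [Function.comp_apply] <;> linarith
  exact this.continuous.comp LevyProkhorov.probabilityMeasureHomeomorph.continuous

end LevyProkhorov

section BowenDist

variable {X : Type*} [MetricSpace X]

theorem Equiv.Perm.uniformContinuous_zpow {f : Equiv.Perm X} (hf : UniformContinuous f)
    (hf' : UniformContinuous f.symm) (i : ℤ) : UniformContinuous ⇑(f ^ i) := by
  obtain ⟨n, rfl | rfl⟩ := Int.eq_nat_or_neg i
  · simpa [Equiv.Perm.coe_pow] using hf.iterate f n
  · rw [zpow_neg, zpow_natCast, ← inv_pow, Equiv.Perm.coe_pow]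
    exact hf'.iterate _ n

def bowenOrbit (f : Equiv.Perm X) (n : ℕ) (x : X) : Finset.Icc (-(n : ℤ)) n → X := fun i => (f ^ (i : ℤ)) x

theorem twoSidedBowenDist_eq_dist (f : Equiv.Perm X) (n : ℕ) (x y : X) :
    twoSidedBowenDist f n x y = dist (bowenOrbit f n x) (bowenOrbit f n y) := by
  rw [dist_pi_def, Finset.univ_eq_attach]
  exact congrArg _ (Finset.sup_attach _ fun i => nndist ((f ^ i) x) ((f ^ i) y)).symm

theorem uniformContinuous_bowenOrbit {f : Equiv.Perm X} (hf : UniformContinuous f)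
    (hf' : UniformContinuous f.symm) (n : ℕ) : UniformContinuous (bowenOrbit f n) :=
  uniformContinuous_pi.2 fun i => Equiv.Perm.uniformContinuous_zpow hf hf' i

theorem twoSidedBowenDist_mono (f : Equiv.Perm X) {m n : ℕ} (h : m ≤ n) (x y : X) :
    twoSidedBowenDist f m x y ≤ twoSidedBowenDist f n x y :=
  NNReal.coe_le_coe.2 <| Finset.sup_mono <| Finset.Icc_subset_Icc (by omega) (by omega)

theorem twoSidedBowenDist_comm (f : Equiv.Perm X) (n : ℕ) (x y : X) :
    twoSidedBowenDist f n x y = twoSidedBowenDist f n y x := by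
  simp only [twoSidedBowenDist_eq_dist, dist_comm]

end BowenDist

section Bump

variable {X : Type*} [MetricSpace X] {f : Equiv.Perm X} {n : ℕ} {ε : ℝ}

theorem twoSidedBump_eq_unitClamp (x y : X) :
    twoSidedBump f n ε x y = unitClamp (2 - twoSidedBowenDist f n x y / ε) := rfl

theorem twoSidedBump_nonneg (x y : X) : 0 ≤ twoSidedBump f n ε x y := unitClamp_nonneg _

theorem twoSidedBump_le_one (x y : X) : twoSidedBump f n ε x y ≤ 1 := unitClamp_le_one _

theorem twoSidedBump_comm (x y : X) : twoSidedBump f n ε x y = twoSidedBump f n ε y x := by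
  rw [twoSidedBump, twoSidedBump, twoSidedBowenDist_comm]

theorem twoSidedBump_le_add (hε : 0 < ε) (x y y' : X) :
    twoSidedBump f n ε x y ≤ twoSidedBump f n ε x y' + twoSidedBowenDist f n y y' / ε := by
  have htri : twoSidedBowenDist f n x y'
      ≤ twoSidedBowenDist f n x y + twoSidedBowenDist f n y y' := by
    simp only [twoSidedBowenDist_eq_dist]
    exact dist_triangle _ _ _
  have hdiv : twoSidedBowenDist f n x y' / ε
      ≤ twoSidedBowenDist f n x y / ε + twoSidedBowenDist f n y y' / ε := by
    rw [← add_div]; gcongr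
  exact unitClamp_le_add (by linarith)
    (div_nonneg (twoSidedBowenDist_eq_dist f n y y' ▸ dist_nonneg) hε.le)

theorem continuous_twoSidedBump (hf : UniformContinuous f) (hf' : UniformContinuous f.symm) :
    Continuous (Function.uncurry (twoSidedBump f n ε)) := by
  have h := (uniformContinuous_bowenOrbit hf hf' n).continuous
  simp only [Function.uncurry_def, twoSidedBump_eq_unitClamp, twoSidedBowenDist_eq_dist]
  exact continuous_unitClamp.comp <| continuous_const.sub <|
    ((h.comp continuous_fst).dist (h.comp continuous_snd)).div_const ε

end Bump

section BumpIntegral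

variable {X : Type*} [MetricSpace X] [MeasurableSpace X] {f : Equiv.Perm X} {ε : ℝ}

/-- The paper's `G_{x,ε,n}(μ)`. -/
noncomputable def bumpIntegral (f : Equiv.Perm X) (μ : Measure X) (ε : ℝ) (n : ℕ) (x : X) : ℝ :=
  ∫ y, twoSidedBump f n ε x y ∂μ

theorem bumpIntegral_nonneg (μ : Measure X) (n : ℕ) (x : X) : 0 ≤ bumpIntegral f μ ε n x :=
  integral_nonneg (twoSidedBump_nonneg x)

variable [OpensMeasurableSpace X]

theorem integrable_twoSidedBump (hf : UniformContinuous f) (hf' : UniformContinuous f.symm)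
    (μ : Measure X) [IsFiniteMeasure μ] (n : ℕ) (x : X) : Integrable (twoSidedBump f n ε x) μ :=
  integrable_of_nonneg_of_le_one
    ((continuous_twoSidedBump hf hf').uncurry_left x).aestronglyMeasurable
    (twoSidedBump_nonneg x) (twoSidedBump_le_one x)

theorem continuous_bumpIntegral (hf : UniformContinuous f) (hf' : UniformContinuous f.symm)
    (μ : Measure X) [IsFiniteMeasure μ] (n : ℕ) : Continuous (bumpIntegral f μ ε n) := by
  refine continuous_of_dominated (F := fun x y => twoSidedBump f n ε x y) (bound := fun _ => 1)
    (fun x => (integrable_twoSidedBump hf hf' μ n x).aestronglyMeasurable)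
    (fun x => ae_of_all _ fun y => ?_) (integrable_const 1)
    (ae_of_all _ fun y => (continuous_twoSidedBump hf hf').uncurry_right y)
  rw [Real.norm_of_nonneg (twoSidedBump_nonneg x y)]
  exact twoSidedBump_le_one x y

theorem bumpIntegral_le_add (hf : UniformContinuous f) (hf' : UniformContinuous f.symm)
    (hε : 0 < ε) (μ : Measure X) [IsProbabilityMeasure μ] (n : ℕ) (x x' : X) :
    bumpIntegral f μ ε n x ≤ bumpIntegral f μ ε n x' + twoSidedBowenDist f n x x' / ε := by
  have hint := integrable_twoSidedBump (ε := ε) hf hf' μ n x'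
  calc bumpIntegral f μ ε n x
      ≤ ∫ y, (twoSidedBump f n ε x' y + twoSidedBowenDist f n x x' / ε) ∂μ := by
        refine integral_mono (integrable_twoSidedBump hf hf' μ n x)
          (hint.add (integrable_const _)) fun y => ?_
        simpa only [twoSidedBump_comm _ y] using twoSidedBump_le_add hε y x x'
    _ = _ := by
        rw [integral_add hint (integrable_const _)]
        simp [bumpIntegral]

theorem bumpIntegral_le_of_levyProkhorovEDist_lt (hf : UniformContinuous f)
    (hf' : UniformContinuous f.symm) (hε : 0 < ε) {κ ν : Measure X} [IsProbabilityMeasure κ]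
    [IsProbabilityMeasure ν] {n : ℕ} {r c : ℝ} (hr : 0 < r) (hc : 0 ≤ c)
    (hmod : ∀ a b, dist a b < r → twoSidedBowenDist f n a b / ε ≤ c)
    (hκν : levyProkhorovEDist κ ν < ENNReal.ofReal r) (x : X) :
    bumpIntegral f κ ε n x ≤ bumpIntegral f ν ε n x + c + r :=
  integral_le_integral_add_of_levyProkhorovEDist_lt
    ((continuous_twoSidedBump hf hf').uncurry_left x).measurable (twoSidedBump_nonneg x)
    (twoSidedBump_le_one x) hr hc
    (fun a b hab => (twoSidedBump_le_add hε x a b).trans (by gcongr; exact hmod a b hab)) hκν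

end BumpIntegral

section ThetaLower

variable {X : Type*} [MetricSpace X] [MeasurableSpace X] {f : Equiv.Perm X} {ε : ℝ} {s : ℕ}

noncomputable def thetaLowerTrunc (f : Equiv.Perm X) (μ : Measure X) (ε : ℝ) (x : X) (s N : ℕ) :
    ℝ :=
  (Finset.Icc s (s + N)).inf' (Finset.nonempty_Icc.2 (Nat.le_add_right s N))
    fun n => bumpIntegral f μ ε n x

theorem thetaLower_le_bumpIntegral (μ : Measure X) (x : X) {n : ℕ} (hn : s ≤ n) :
    thetaLower f μ ε x s ≤ bumpIntegral f μ ε n x :=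
  ciInf_le ⟨0, by rintro _ ⟨m, rfl⟩; exact bumpIntegral_nonneg μ m x⟩ (⟨n, hn⟩ : {m // s ≤ m})

theorem thetaLower_le_thetaLowerTrunc (μ : Measure X) (x : X) (N : ℕ) :
    thetaLower f μ ε x s ≤ thetaLowerTrunc f μ ε x s N := by
  obtain ⟨n, hn, heq⟩ := Finset.exists_mem_eq_inf' (Finset.nonempty_Icc.2 (Nat.le_add_right s N))
    fun n => bumpIntegral f μ ε n x
  rw [thetaLowerTrunc, heq]
  exact thetaLower_le_bumpIntegral μ x (Finset.mem_Icc.1 hn).1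

theorem tendsto_thetaLowerTrunc (μ : Measure X) (x : X) :
    Tendsto (thetaLowerTrunc f μ ε x s) atTop (𝓝 (thetaLower f μ ε x s)) := by
  refine tendsto_order.2 ⟨fun b hb => Eventually.of_forall fun N =>
    hb.trans_le (thetaLower_le_thetaLowerTrunc μ x N), fun b hb => ?_⟩
  have : Nonempty {m : ℕ // s ≤ m} := ⟨⟨s, le_rfl⟩⟩
  obtain ⟨⟨n, hn⟩, hlt⟩ := exists_lt_of_ciInf_lt hb
  refine eventually_atTop.2 ⟨n - s, fun N hN => ?_⟩
  exact (Finset.inf'_le _ (Finset.mem_Icc.2 ⟨hn, by omega⟩)).trans_lt hlt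

variable [OpensMeasurableSpace X]

theorem continuous_thetaLowerTrunc (hf : UniformContinuous f) (hf' : UniformContinuous f.symm)
    (μ : Measure X) [IsFiniteMeasure μ] (N : ℕ) :
    Continuous fun x => thetaLowerTrunc f μ ε x s N :=
  Continuous.finset_inf'_apply _ fun n _ => continuous_bumpIntegral hf hf' μ n

theorem measurable_thetaLower (hf : UniformContinuous f) (hf' : UniformContinuous f.symm)
    (μ : Measure X) [IsFiniteMeasure μ] : Measurable fun x => thetaLower f μ ε x s :=
  Measurable.iInf fun n => (continuous_bumpIntegral hf hf' μ n).measurable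

theorem thetaLowerTrunc_le_add (hf : UniformContinuous f) (hf' : UniformContinuous f.symm)
    (hε : 0 < ε) (μ : Measure X) [IsProbabilityMeasure μ] (N : ℕ) (x x' : X) :
    thetaLowerTrunc f μ ε x s N
      ≤ thetaLowerTrunc f μ ε x' s N + twoSidedBowenDist f (s + N) x x' / ε :=
  Finset.inf'_le_inf'_add _ fun n hn => (bumpIntegral_le_add hf hf' hε μ n x x').trans <| by
    gcongr
    exact twoSidedBowenDist_mono f (Finset.mem_Icc.1 hn).2 x x'

end ThetaLower

section Excess

variable {X : Type*} [MetricSpace X] [MeasurableSpace X] [OpensMeasurableSpace X]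
  {f : Equiv.Perm X} {ε : ℝ} {s : ℕ}

noncomputable def excessIntegral (f : Equiv.Perm X) (ε α : ℝ) (s : ℕ) (μ : Measure X) : ℝ :=
  ∫ x, unitClamp (thetaLower f μ ε x s - α) ∂μ

noncomputable def truncExcessIntegral (f : Equiv.Perm X) (ε α : ℝ) (s N : ℕ) (μ : Measure X) :
    ℝ :=
  ∫ x, unitClamp (thetaLowerTrunc f μ ε x s N - α) ∂μ

theorem ae_thetaLower_le_iff_excessIntegral_nonpos (hf : UniformContinuous f)
    (hf' : UniformContinuous f.symm) (μ : Measure X) [IsFiniteMeasure μ] (α : ℝ) :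
    (∀ᵐ x ∂μ, thetaLower f μ ε x s ≤ α) ↔ excessIntegral f ε α s μ ≤ 0 :=
  ae_le_iff_integral_unitClamp_sub_nonpos (measurable_thetaLower hf hf' μ).aestronglyMeasurable α

theorem excessIntegral_le_truncExcessIntegral (hf : UniformContinuous f)
    (hf' : UniformContinuous f.symm) (μ : Measure X) [IsFiniteMeasure μ] (α : ℝ) (N : ℕ) :
    excessIntegral f ε α s μ ≤ truncExcessIntegral f ε α s N μ :=
  integral_mono
    (integrable_unitClamp_comp ((measurable_thetaLower hf hf' μ).sub_const α).aestronglyMeasurable)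
    (integrable_unitClamp_comp
      ((continuous_thetaLowerTrunc hf hf' μ N).sub continuous_const).aestronglyMeasurable)
    fun x => unitClamp_mono (sub_le_sub_right (thetaLower_le_thetaLowerTrunc μ x N) α)

theorem tendsto_truncExcessIntegral (hf : UniformContinuous f) (hf' : UniformContinuous f.symm)
    (μ : Measure X) [IsFiniteMeasure μ] (α : ℝ) :
    Tendsto (fun N => truncExcessIntegral f ε α s N μ) atTop (𝓝 (excessIntegral f ε α s μ)) :=
  tendsto_integral_of_dominated_convergence (fun _ => 1)
    (fun N => (continuous_unitClamp.comp
      ((continuous_thetaLowerTrunc hf hf' μ N).sub continuous_const)).aestronglyMeasurable)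
    (integrable_const 1)
    (fun N => ae_of_all _ fun x => by
      rw [Real.norm_of_nonneg (unitClamp_nonneg _)]; exact unitClamp_le_one _)
    (ae_of_all _ fun x =>
      (continuous_unitClamp.tendsto _).comp ((tendsto_thetaLowerTrunc μ x).sub_const α))

theorem truncExcessIntegral_le_add_of_levyProkhorovEDist_lt (hf : UniformContinuous f)
    (hf' : UniformContinuous f.symm) (hε : 0 < ε) {κ ν : Measure X} [IsProbabilityMeasure κ]
    [IsProbabilityMeasure ν] (α : ℝ) (N : ℕ) {r c : ℝ} (hr : 0 < r) (hc : 0 ≤ c)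
    (hmod : ∀ a b, dist a b < r → twoSidedBowenDist f (s + N) a b / ε ≤ c)
    (hκν : levyProkhorovEDist κ ν < ENNReal.ofReal r) :
    truncExcessIntegral f ε α s N κ ≤ truncExcessIntegral f ε α s N ν + 2 * (c + r) := by
  have hθκν (x : X) : thetaLowerTrunc f κ ε x s N ≤ thetaLowerTrunc f ν ε x s N + (c + r) :=
    Finset.inf'_le_inf'_add _ fun n hn => by
      rw [← add_assoc]
      refine bumpIntegral_le_of_levyProkhorovEDist_lt hf hf' hε hr hc (fun a b hab => ?_) hκν x
      exact (div_le_div_of_nonneg_right (twoSidedBowenDist_mono f (Finset.mem_Icc.1 hn).2 a b)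
        hε.le).trans (hmod a b hab)
  set H : X → ℝ := fun x => unitClamp (thetaLowerTrunc f ν ε x s N - α)
  have hH : Continuous H :=
    continuous_unitClamp.comp ((continuous_thetaLowerTrunc hf hf' ν N).sub continuous_const)
  have hHmod (a b : X) (hab : dist a b < r) : H a ≤ H b + c := by
    refine unitClamp_le_add ?_ hc
    linarith [thetaLowerTrunc_le_add (s := s) hf hf' hε ν N a b, hmod a b hab]
  have hHκ : Integrable H κ := integrable_unitClamp_comp
    ((continuous_thetaLowerTrunc hf hf' ν N).sub continuous_const).aestronglyMeasurable
  -- `c + r` is paid once for changing the measure inside `ψ_N`, once for the integrating measure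
  calc truncExcessIntegral f ε α s N κ ≤ ∫ x, (H x + (c + r)) ∂κ :=
        integral_mono (integrable_unitClamp_comp
          ((continuous_thetaLowerTrunc hf hf' κ N).sub continuous_const).aestronglyMeasurable)
          (hHκ.add (integrable_const _))
          fun x => unitClamp_le_add (by linarith [hθκν x]) (by positivity)
    _ = ∫ x, H x ∂κ + (c + r) := by rw [integral_add hHκ (integrable_const _)]; simp
    _ ≤ ∫ x, H x ∂ν + c + r + (c + r) := by
        gcongr ?_ + _
        exact integral_le_integral_add_of_levyProkhorovEDist_lt hH.measurable
          (fun _ => unitClamp_nonneg _) (fun _ => unitClamp_le_one _) hr hc hHmod hκν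
    _ = truncExcessIntegral f ε α s N ν + 2 * (c + r) := by rw [truncExcessIntegral]; ring

theorem continuous_truncExcessIntegral [SeparableSpace X] (hf : UniformContinuous f)
    (hf' : UniformContinuous f.symm) (hε : 0 < ε) (α : ℝ) (N : ℕ) :
    Continuous fun μ : ProbabilityMeasure X => truncExcessIntegral f ε α s N μ := by
  refine ProbabilityMeasure.continuous_of_forall_levyProkhorovEDist_lt fun δ hδ => ?_
  obtain ⟨η, hη, hD⟩ := Metric.uniformContinuous_iff.1
    (uniformContinuous_bowenOrbit hf hf' (s + N)) (ε * (δ / 4)) (by positivity)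
  refine ⟨min η (δ / 4), by positivity, fun κ ν hκν => ?_⟩
  have hmod (a b : X) (hab : dist a b < min η (δ / 4)) :
      twoSidedBowenDist f (s + N) a b / ε ≤ δ / 4 := by
    rw [div_le_iff₀ hε, twoSidedBowenDist_eq_dist, mul_comm]
    exact (hD (hab.trans_le (min_le_left _ _))).le
  have := truncExcessIntegral_le_add_of_levyProkhorovEDist_lt hf hf' hε α N (by positivity)
    (by positivity) hmod hκν
  linarith [min_le_right η (δ / 4)]

end Excess

theorem stmt18_general {X : Type*} [MetricSpace X] [PolishSpace X] [MeasurableSpace X] [BorelSpace X]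
    (f : Equiv.Perm X) (hf : UniformContinuous f) (hf' : UniformContinuous f.symm)
    (α ε : ℝ) (hε : 0 < ε) (s : ℕ) :
    IsGδ {μ : ProbabilityMeasure X |
      ∀ᵐ x ∂(μ : Measure X), thetaLower f (μ : Measure X) ε x s ≤ α} := by
  have hS : {μ : ProbabilityMeasure X | ∀ᵐ x ∂(μ : Measure X), thetaLower f μ ε x s ≤ α}
      = {μ : ProbabilityMeasure X | excessIntegral f ε α s μ ≤ 0} :=
    Set.ext fun μ => ae_thetaLower_le_iff_excessIntegral_nonpos hf hf' μ α
  rw [hS]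
  exact (upperSemicontinuous_of_tendsto_of_le (continuous_truncExcessIntegral hf hf' hε α)
    (fun μ => tendsto_truncExcessIntegral hf hf' μ α)
    (fun N μ => excessIntegral_le_truncExcessIntegral hf hf' μ α N)).isGδ_setOf_le 0

theorem stmt18 {X : Type*} [MetricSpace X] [PolishSpace X] [MeasurableSpace X] [BorelSpace X]
    (f : Equiv.Perm X) (hf : UniformContinuous f) (hf' : UniformContinuous f.symm)
    (α ε : ℝ) (hα : 0 < α) (hε : 0 < ε) (s : ℕ) :
    IsGδ {μ : ProbabilityMeasure X |
      ∀ᵐ x ∂(μ : Measure X), thetaLower f (μ : Measure X) ε x s ≤ α} :=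
  stmt18_general f hf hf' α ε hε s
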